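/- arXiv:2203.02705 — 2 statements merged into one kernel-verified Lean document; each statement's English description precedes it below -/
import Mathlib

section
/- Let N = 8n with n ≥ 1, let A = {1,...,4n} and B = {4n+1,...,8n}, and let y be the permutation swapping i and 4n+i for 1 ≤ i ≤ 4n. If z maps A into A, then the order of y·z is even. -/
/-!
`y` exchanges `A = {i | i < 4n}` with its complement, and `z`, which maps the finite set `A`
into itself, preserves both `A` and its complement. Hence `y * z` exchanges `A` and its
complement, so `(y * z) ^ m` moves a point of `A` out of `A` for every odd `m`; since
`(y * z) ^ orderOf (y * z) = 1` fixes the point `0 ∈ A`, the order is even.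
-/

namespace Equiv.Perm

variable {α : Type*}

theorem mapsTo_compl_of_mapsTo [Finite α] {σ : Perm α} {s : Set α} (h : Set.MapsTo σ s s) :
    Set.MapsTo σ sᶜ sᶜ :=
  (((Set.toFinite s).injOn_iff_bijOn_of_mapsTo h).mp σ.injective.injOn).surjOn.mapsTo_compl
    σ.injective

theorem pow_apply_mem_iff_of_apply_mem_iff_notMem {σ : Perm α} {s : Set α}
    (h : ∀ x, σ x ∈ s ↔ x ∉ s) (m : ℕ) (x : α) : (σ ^ m) x ∈ s ↔ (Even m ↔ x ∈ s) := by
  induction m generalizing x with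
  | zero => simp
  | succ k ih =>
    rw [pow_succ, mul_apply, ih, h, Nat.even_add_one]
    tauto

theorem even_orderOf_of_apply_mem_iff_notMem [Nonempty α] {σ : Perm α} {s : Set α}
    (h : ∀ x, σ x ∈ s ↔ x ∉ s) : Even (orderOf σ) := by
  obtain ⟨x⟩ := ‹Nonempty α›
  have hx := pow_apply_mem_iff_of_apply_mem_iff_notMem h (orderOf σ) x
  rw [pow_orderOf_eq_one, one_apply] at hx
  tauto

end Equiv.Perm

/-- With `N = 8n` (`n ≥ 1`), `y` the permutation swapping `i` and `4n + i`
for `i < 4n`, and `z` any permutation mapping `A = {i : i < 4n}` into itself,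
the order of `y * z` is even. -/
theorem stmt1 (n : ℕ) (hn : 1 ≤ n) (y z : Equiv.Perm (Fin (8 * n)))
    (hy : ∀ i : Fin (8 * n),
      ((y i : Fin (8 * n)) : ℕ) = if (i : ℕ) < 4 * n then (i : ℕ) + 4 * n else (i : ℕ) - 4 * n)
    (hz : ∀ i : Fin (8 * n), (i : ℕ) < 4 * n → ((z i : Fin (8 * n)) : ℕ) < 4 * n) :
    Even (orderOf (y * z)) := by
  have : Nonempty (Fin (8 * n)) := ⟨⟨0, by omega⟩⟩
  set A : Set (Fin (8 * n)) := {i | (i : ℕ) < 4 * n}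
  have hzA : Set.MapsTo z A A := fun i hi => hz i hi
  have hzAc : Set.MapsTo z Aᶜ Aᶜ := Equiv.Perm.mapsTo_compl_of_mapsTo hzA
  have hyA : ∀ i, y i ∈ A ↔ i ∉ A := by
    intro i
    have := i.isLt
    simp only [A, Set.mem_ofPred_eq, hy]
    split_ifs <;> omega
  refine Equiv.Perm.even_orderOf_of_apply_mem_iff_notMem (s := A) fun i => ?_
  rw [Equiv.Perm.mul_apply, hyA]
  exact ⟨fun hzi hi => hzi (hzA hi), fun hi => hzAc hi⟩
end

section
/- Let N = 8n with n ≥ 1, and let x = (1 2)(3 4)···(4n−1 4n), y = (1 4n+1)(2 4n+2)···(4n 8n) in A_N. Then every element of the coset y·Z_{A_N}(x) is a product of disjoint cycles, each of even length; equivalently, every cycle in its cycle decomposition has even length. -/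
/-!
Let `s` be the first half `{i | i < 4n}`. A permutation `z` commuting with `x` preserves the
fixed-point set of `x`, which is the complement of `s`; and `y` swaps `s` with its complement.
Hence `σ = y * z` maps `s` onto its complement and back, so `σ ^ k a` lies on the same side as `a`
exactly when `k` is even. A fixed point is impossible, and if `c` is a cycle length of `σ` then
`σ ^ c` fixes a point of that cycle, forcing `c` to be even.
-/

namespace Equiv.Perm

variable {α : Type*} {σ : Perm α} {s : Set α}

theorem pow_apply_mem_iff_of_apply_mem_iff_notMem_s4 (hσ : ∀ a, σ a ∈ s ↔ a ∉ s) (a : α) (k : ℕ) :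
    (σ ^ k) a ∈ s ↔ (a ∈ s ↔ Even k) := by
  induction k with
  | zero => simp
  | succ k ih => rw [pow_succ', mul_apply, hσ, ih, Nat.even_add_one]; tauto

theorem apply_ne_self_of_apply_mem_iff_notMem (hσ : ∀ a, σ a ∈ s ↔ a ∉ s) (a : α) : σ a ≠ a :=
  fun h => by simpa [h] using hσ a

theorem exists_pow_apply_eq_self_of_mem_cycleType [Fintype α] [DecidableEq α] {c : ℕ}
    (hc : c ∈ σ.cycleType) : ∃ a, (σ ^ c) a = a := by
  rw [cycleType_def, Multiset.mem_map] at hc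
  obtain ⟨g, hg, rfl⟩ := hc
  have hg : g ∈ σ.cycleFactorsFinset := hg
  have hcycle : g.IsCycle := (mem_cycleFactorsFinset_iff.mp hg).1
  obtain ⟨a, ha⟩ := hcycle.nonempty_support
  refine ⟨a, ?_⟩
  rw [← cycleOf_pow_apply_self, ← cycle_is_cycleOf ha hg, Function.comp_apply, ← hcycle.orderOf,
    pow_orderOf_eq_one, one_apply]

theorem even_of_mem_cycleType_of_apply_mem_iff_notMem [Fintype α] [DecidableEq α]
    (hσ : ∀ a, σ a ∈ s ↔ a ∉ s) {c : ℕ} (hc : c ∈ σ.cycleType) : Even c := by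
  obtain ⟨a, ha⟩ := exists_pow_apply_eq_self_of_mem_cycleType hc
  have h := pow_apply_mem_iff_of_apply_mem_iff_notMem_s4 hσ a c
  rw [ha] at h
  tauto

theorem apply_apply_eq_self_iff_of_commute {x z : Perm α} (h : Commute z x) (a : α) :
    x (z a) = z a ↔ x a = a := by
  rw [← mul_apply, ← h.eq, mul_apply, z.injective.eq_iff]

end Equiv.Perm

open Equiv

section Halves

variable {m k : ℕ}

theorem apply_eq_self_iff_of_swap_adjacent_below {x : Perm (Fin m)}
    (hx : ∀ i : Fin m, ((x i : Fin m) : ℕ) =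
      if (i : ℕ) < k then (if (i : ℕ) % 2 = 0 then (i : ℕ) + 1 else (i : ℕ) - 1) else (i : ℕ))
    (i : Fin m) : x i = i ↔ ¬ (i : ℕ) < k := by
  rw [Fin.ext_iff, hx i]
  split_ifs <;> omega

theorem apply_lt_iff_of_shift_halves (hm : m ≤ 2 * k) {y : Perm (Fin m)}
    (hy : ∀ i : Fin m, ((y i : Fin m) : ℕ) = if (i : ℕ) < k then (i : ℕ) + k else (i : ℕ) - k)
    (i : Fin m) : ((y i : Fin m) : ℕ) < k ↔ ¬ (i : ℕ) < k := by
  have := i.isLt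
  rw [hy i]
  split_ifs <;> omega

end Halves

theorem stmt4_general (n : ℕ) (x y : Equiv.Perm (Fin (8 * n)))
    (hx : ∀ i : Fin (8 * n), ((x i : Fin (8 * n)) : ℕ) =
      if (i : ℕ) < 4 * n then (if (i : ℕ) % 2 = 0 then (i : ℕ) + 1 else (i : ℕ) - 1)
      else (i : ℕ))
    (hy : ∀ i : Fin (8 * n),
      ((y i : Fin (8 * n)) : ℕ) = if (i : ℕ) < 4 * n then (i : ℕ) + 4 * n else (i : ℕ) - 4 * n) :
    ∀ z : Equiv.Perm (Fin (8 * n)), z ∈ alternatingGroup (Fin (8 * n)) → z * x = x * z →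
      (∀ c ∈ (y * z).cycleType, Even c) ∧ ∀ a : Fin (8 * n), (y * z) a ≠ a := by
  intro z _ hcomm
  have hz : ∀ i : Fin (8 * n), ((z i : Fin (8 * n)) : ℕ) < 4 * n ↔ (i : ℕ) < 4 * n := fun i => by
    simpa only [apply_eq_self_iff_of_swap_adjacent_below hx, not_iff_not] using
      Perm.apply_apply_eq_self_iff_of_commute hcomm i
  have hyz : ∀ i, (y * z) i ∈ {j : Fin (8 * n) | (j : ℕ) < 4 * n} ↔
      i ∉ {j : Fin (8 * n) | (j : ℕ) < 4 * n} := fun i => by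
    simpa [hz] using apply_lt_iff_of_shift_halves (by omega) hy (z i)
  exact ⟨fun c hc => Perm.even_of_mem_cycleType_of_apply_mem_iff_notMem hyz hc,
    Perm.apply_ne_self_of_apply_mem_iff_notMem hyz⟩

/-- With `N = 8n` (`n ≥ 1`), `x = (1 2)(3 4)⋯(4n-1 4n)` and
`y = (1 4n+1)(2 4n+2)⋯(4n 8n)`, every element `y * z` of the coset `y ⬝ Z_{A_N}(x)` is a product
of disjoint cycles each of even length: every cycle in its cycle decomposition has even length
and `y * z` has no fixed points. -/
theorem stmt4 (n : ℕ) (hn : 1 ≤ n) (x y : Equiv.Perm (Fin (8 * n)))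
    (hx : ∀ i : Fin (8 * n), ((x i : Fin (8 * n)) : ℕ) =
      if (i : ℕ) < 4 * n then (if (i : ℕ) % 2 = 0 then (i : ℕ) + 1 else (i : ℕ) - 1)
      else (i : ℕ))
    (hy : ∀ i : Fin (8 * n),
      ((y i : Fin (8 * n)) : ℕ) = if (i : ℕ) < 4 * n then (i : ℕ) + 4 * n else (i : ℕ) - 4 * n) :
    ∀ z : Equiv.Perm (Fin (8 * n)), z ∈ alternatingGroup (Fin (8 * n)) → z * x = x * z →
      (∀ c ∈ (y * z).cycleType, Even c) ∧ ∀ a : Fin (8 * n), (y * z) a ≠ a :=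
  stmt4_general n x y hx hy
end
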